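/- Let n be an odd positive integer, μ > 0, and h : ℂ → ℂ. A complex number s satisfies 1 + μ^n h(s)^n ∏_{i=1}^n (1+δ_i) = 0 for some complex δ_1,…,δ_n with |δ_i| ≤ r (where 0 < r < 1) if and only if there exists δ ∈ ℂ with |δ| ≤ r and an index k ∈ {1,…,n} such that λ_k h(s)(1+δ) = 1, where λ_k = μ e^{i(2k−1)π/n}. -/

import Mathlib

/-!
The disk `D = {1 + δ : ‖δ‖ ≤ r}` is convex in logarithmic coordinates: for `w = x + iy` the
condition `‖exp w - 1‖ ≤ r` reads `exp x + (1 - r²) exp (-x) ≤ 2 cos y`, a sublevel set of a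
function that is convex on the strip `|y| ≤ π/2`. So the mean of the logarithms of the factors
`1 + δ i` is the logarithm of some `W ∈ D` with `W ^ n = ∏ i, (1 + δ i)`, and the equation becomes
`(μ h(s) W) ^ n = -1`: `μ h(s) W` is the reciprocal of one of the roots `exp (i(2k - 1)π/n)` of `-1`.
-/

open Complex Metric Set
open scoped Real

lemma Complex.norm_exp_sub_one_le_iff {r : ℝ} (hr : 0 ≤ r) (w : ℂ) :
    ‖exp w - 1‖ ≤ r ↔
      Real.exp w.re + (1 - r ^ 2) * Real.exp (-w.re) ≤ 2 * Real.cos w.im := by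
  have hnormSq : ‖exp w - 1‖ ^ 2 =
      Real.exp w.re ^ 2 - 2 * Real.exp w.re * Real.cos w.im + 1 := by
    rw [Complex.sq_norm, normSq_apply, sub_re, sub_im, exp_re, exp_im, one_re, one_im]
    linear_combination Real.exp w.re ^ 2 * Real.sin_sq_add_cos_sq w.im
  have hpos := Real.exp_pos w.re
  have hinv : Real.exp w.re * Real.exp (-w.re) = 1 := by
    rw [← Real.exp_add, add_neg_cancel, Real.exp_zero]
  rw [← sq_le_sq₀ (norm_nonneg _) hr, hnormSq]
  constructor <;> intro h <;> nlinarith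

lemma Complex.ne_zero_of_mem_closedBall_one {r : ℝ} (hr1 : r < 1) {z : ℂ}
    (hz : z ∈ closedBall 1 r) : z ≠ 0 := by
  rintro rfl
  rw [mem_closedBall_iff_norm] at hz
  norm_num at hz
  linarith

lemma Complex.log_image_closedBall_one {r : ℝ} (hr0 : 0 ≤ r) (hr1 : r < 1) :
    log '' closedBall 1 r = {w : ℂ | w.im ∈ Icc (-(π / 2)) (π / 2) ∧
      Real.exp w.re + (1 - r ^ 2) * Real.exp (-w.re) ≤ 2 * Real.cos w.im} := by
  ext w
  constructor
  · rintro ⟨z, hz, rfl⟩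
    have hz0 := ne_zero_of_mem_closedBall_one hr1 hz
    rw [mem_closedBall_iff_norm] at hz
    have hre : 0 ≤ z.re := by
      have := (abs_le.1 ((abs_re_le_norm (z - 1)).trans hz)).1
      rw [sub_re, one_re] at this
      linarith
    refine ⟨abs_le.1 (by rw [log_im]; exact abs_arg_le_pi_div_two_iff.2 hre), ?_⟩
    rw [← norm_exp_sub_one_le_iff hr0, exp_log hz0]
    exact hz
  · rintro ⟨him, hw⟩
    refine ⟨exp w, ?_,
      log_exp (by linarith [him.1, Real.pi_pos]) (by linarith [him.2, Real.pi_pos])⟩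
    rw [mem_closedBall_iff_norm, norm_exp_sub_one_le_iff hr0]
    exact hw

lemma Complex.convex_log_image_closedBall_one {r : ℝ} (hr1 : r < 1) :
    Convex ℝ (log '' closedBall 1 r) := by
  rcases lt_or_ge r 0 with hr0 | hr0
  · simp [closedBall_eq_empty.2 hr0, convex_empty]
  have hre : ConvexOn ℝ univ (fun w : ℂ => Real.exp w.re) :=
    convexOn_exp.comp_linearMap reLm
  have hnre : ConvexOn ℝ univ (fun w : ℂ => Real.exp (-w.re)) :=
    convexOn_exp.comp_linearMap (-reLm)
  have hcos : ConvexOn ℝ (im ⁻¹' Icc (-(π / 2)) (π / 2)) (fun w : ℂ => -(2 * Real.cos w.im)) :=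
    ((strictConcaveOn_cos_Icc.concaveOn.comp_linearMap imLm).smul (by norm_num : (0:ℝ) ≤ 2)).neg
  have hφ := ((hre.subset (subset_univ _) hcos.1).add
    ((hnre.smul (by nlinarith : (0:ℝ) ≤ 1 - r ^ 2)).subset (subset_univ _) hcos.1)).add hcos
  rw [log_image_closedBall_one hr0 hr1]
  convert hφ.convex_le 0 using 2 with w
  simp only [mem_Icc, mem_preimage, smul_eq_mul, Pi.add_apply, add_neg_le_iff_le_add, zero_add]

lemma Complex.exists_mem_closedBall_one_pow_eq_prod {ι : Type*} [Fintype ι] [Nonempty ι]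
    {r : ℝ} (hr1 : r < 1) (z : ι → ℂ) (hz : ∀ i, z i ∈ closedBall 1 r) :
    ∃ W ∈ closedBall (1 : ℂ) r, W ^ Fintype.card ι = ∏ i, z i := by
  have hcard : (0 : ℝ) < Fintype.card ι := by exact_mod_cast Fintype.card_pos
  obtain ⟨W, hW, hmean⟩ : ∑ i, (Fintype.card ι : ℝ)⁻¹ • log (z i) ∈ log '' closedBall 1 r :=
    (convex_log_image_closedBall_one hr1).sum_mem (fun _ _ => by positivity)
      (by simp [Finset.card_univ, hcard.ne']) (fun i _ => mem_image_of_mem _ (hz i))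
  refine ⟨W, hW, ?_⟩
  have hcancel : (Fintype.card ι : ℂ) * ((Fintype.card ι : ℝ)⁻¹ • ∑ i, log (z i)) =
      ∑ i, log (z i) := by
    rw [real_smul]; push_cast; field_simp
  rw [← exp_log (ne_zero_of_mem_closedBall_one hr1 hW), ← exp_nat_mul, hmean, ← Finset.smul_sum,
    hcancel, exp_sum]
  exact Finset.prod_congr rfl fun i _ => exp_log (ne_zero_of_mem_closedBall_one hr1 (hz i))

lemma Complex.exp_pow_eq_neg_one {n : ℕ} (hn : n ≠ 0) (k : ℕ) :
    exp (I * (2 * ((k : ℂ) + 1) - 1) * π / n) ^ n = -1 := by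
  rw [← exp_nat_mul, mul_div_cancel₀ _ (by exact_mod_cast hn),
    show I * (2 * ((k : ℂ) + 1) - 1) * π = k * (2 * π * I) + π * I by ring, exp_add,
    exp_nat_mul_two_pi_mul_I, exp_pi_mul_I, one_mul]

lemma Complex.exists_mul_exp_eq_one_of_pow_eq_neg_one {n : ℕ} {ζ : ℂ} (hζ : ζ ^ n = -1) :
    ∃ k : Fin n, ζ * exp (I * (2 * ((k : ℕ) + 1) - 1) * π / n) = 1 := by
  have hn : n ≠ 0 := by rintro rfl; norm_num at hζ
  have : NeZero n := ⟨hn⟩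
  have hζ0 : ζ ≠ 0 := by rintro rfl; simp [hn] at hζ
  have hc : exp (π * I / n) ^ n = -1 := by
    rw [← exp_nat_mul, mul_div_cancel₀ _ (by exact_mod_cast hn), exp_pi_mul_I]
  obtain ⟨k, hk, hρ⟩ := (isPrimitiveRoot_exp n hn).eq_pow_of_pow_eq_one
    (ξ := ζ⁻¹ / exp (π * I / n)) (by rw [div_pow, inv_pow, hζ, hc]; norm_num)
  refine ⟨⟨k, hk⟩, ?_⟩
  rw [← exp_nat_mul, eq_div_iff (exp_ne_zero _), ← exp_add] at hρ
  have hexp : exp (I * (2 * ((k : ℂ) + 1) - 1) * π / n) = ζ⁻¹ := by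
    rw [← hρ]; congr 1; ring
  exact hexp ▸ mul_inv_cancel₀ hζ0

theorem stmt_6_general (n : ℕ) (μ : ℝ)
    (r : ℝ) (hr1 : r < 1) (h : ℂ → ℂ) (s : ℂ) :
    (∃ δ : Fin n → ℂ, (∀ i, ‖δ i‖ ≤ r) ∧
      1 + (μ : ℂ) ^ n * (h s) ^ n * ∏ i, (1 + δ i) = 0) ↔
    (∃ δ : ℂ, ‖δ‖ ≤ r ∧ ∃ k : Fin n,
      ((μ : ℂ) * Complex.exp (Complex.I * (2 * ((k : ℕ) + 1) - 1) * Real.pi / n)) *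
        h s * (1 + δ) = 1) := by
  constructor
  · rintro ⟨δ, hδ, hroot⟩
    have : NeZero n := ⟨by rintro rfl; norm_num at hroot⟩
    obtain ⟨W, hW, hWn⟩ := exists_mem_closedBall_one_pow_eq_prod hr1 (fun i => 1 + δ i)
      (fun i => by simpa [mem_closedBall_iff_norm] using hδ i)
    rw [Fintype.card_fin] at hWn
    obtain ⟨k, hk⟩ := exists_mul_exp_eq_one_of_pow_eq_neg_one (ζ := μ * h s * W)
      (by rw [mul_pow, mul_pow, hWn]; linear_combination hroot)
    refine ⟨W - 1, mem_closedBall_iff_norm.1 hW, k, ?_⟩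
    rw [add_sub_cancel]
    linear_combination hk
  · rintro ⟨δ, hδ, k, hk⟩
    refine ⟨fun _ => δ, fun _ => hδ, ?_⟩
    have hpow := congrArg (· ^ n) hk
    simp only [mul_pow, one_pow, exp_pow_eq_neg_one k.pos.ne'] at hpow
    rw [Finset.prod_const, Finset.card_univ, Fintype.card_fin]
    linear_combination -hpow

theorem stmt_6 (n : ℕ) (hn : Odd n) (hn1 : 0 < n) (μ : ℝ) (hμ : 0 < μ)
    (r : ℝ) (hr0 : 0 < r) (hr1 : r < 1) (h : ℂ → ℂ) (s : ℂ) :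
    (∃ δ : Fin n → ℂ, (∀ i, ‖δ i‖ ≤ r) ∧
      1 + (μ : ℂ) ^ n * (h s) ^ n * ∏ i, (1 + δ i) = 0) ↔
    (∃ δ : ℂ, ‖δ‖ ≤ r ∧ ∃ k : Fin n,
      ((μ : ℂ) * Complex.exp (Complex.I * (2 * ((k : ℕ) + 1) - 1) * Real.pi / n)) *
        h s * (1 + δ) = 1) :=
  stmt_6_general n μ r hr1 h s
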